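/- G_{p,q} has no cyclic quotient of odd composite order: for every normal subgroup N of G_{p,q}, if the quotient G_{p,q}/N is cyclic of odd order, then its order is 1 or a prime. -/

import Mathlib

open Multiplicative

namespace Mizerka

/-- The standing hypotheses: `p` and `q` are odd primes with `q ∣ p - 1`, and `i` is a
natural number with `i ≡ 1 (mod q)` whose multiplicative order modulo `p` equals `q`. -/
structure Hyp (p q i : ℕ) : Prop where
  hp : Nat.Prime p
  hq : Nat.Prime q
  hoddp : Odd p
  hoddq : Odd q
  hdvd : q ∣ p - 1
  hmod : i ≡ 1 [MOD q]
  hord : orderOf (i : ZMod p) = q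

namespace Hyp

variable {p q i : ℕ}

theorem coprime_q (h : Hyp p q i) : Nat.Coprime i q := by
  have h1 : i % q = 1 % q := h.hmod
  unfold Nat.Coprime
  rw [Nat.gcd_comm, Nat.gcd_rec, h1, ← Nat.gcd_rec, Nat.gcd_one_right]

theorem coprime_p (h : Hyp p q i) : Nat.Coprime i p := by
  haveI : NeZero p := ⟨h.hp.ne_zero⟩
  have hq1 : q - 1 + 1 = q := Nat.succ_pred_eq_of_pos h.hq.pos
  have hmul : (i : ZMod p) * (i : ZMod p) ^ (q - 1) = 1 := by
    rw [← pow_succ', hq1, ← h.hord, pow_orderOf_eq_one]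
  exact (ZMod.isUnit_iff_coprime i p).mp ⟨⟨_, _, hmul, by rw [mul_comm]; exact hmul⟩, rfl⟩

theorem coprime (h : Hyp p q i) : Nat.Coprime i (p * q) :=
  Nat.Coprime.mul_right h.coprime_p h.coprime_q

theorem pow_q_modeq (h : Hyp p q i) : i ^ q ≡ 1 [MOD p * q] := by
  have hpq : p ≠ q := by
    have h1 : 0 < p - 1 := by have := h.hp.two_le; omega
    have := Nat.le_of_dvd h1 h.hdvd
    omega
  have hc : Nat.Coprime p q := (Nat.coprime_primes h.hp h.hq).mpr hpq
  rw [← Nat.modEq_and_modEq_iff_modEq_mul hc]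
  constructor
  · haveI : NeZero p := ⟨h.hp.ne_zero⟩
    have hcast : ((i ^ q : ℕ) : ZMod p) = ((1 : ℕ) : ZMod p) := by
      push_cast
      rw [← h.hord, pow_orderOf_eq_one]
    exact (ZMod.natCast_eq_natCast_iff _ _ _).mp hcast
  · calc i ^ q ≡ 1 ^ q [MOD q] := h.hmod.pow q
      _ = 1 := one_pow q

/-- The unit of `ZMod (p*q)` determined by `i`. -/
def unit (h : Hyp p q i) : (ZMod (p * q))ˣ := ZMod.unitOfCoprime i h.coprime

/-- The unit of `ZMod p` determined by `i`. -/
def unitP (h : Hyp p q i) : (ZMod p)ˣ := ZMod.unitOfCoprime i h.coprime_p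

theorem unit_pow (h : Hyp p q i) : h.unit ^ q = 1 := by
  apply Units.ext
  have h2 : ((i ^ q : ℕ) : ZMod (p * q)) = ((1 : ℕ) : ZMod (p * q)) :=
    (ZMod.natCast_eq_natCast_iff _ _ _).mpr h.pow_q_modeq
  push_cast at h2
  simpa [Hyp.unit] using h2

theorem unitP_pow (h : Hyp p q i) : h.unitP ^ q = 1 := by
  apply Units.ext
  have h2 : (i : ZMod p) ^ q = 1 := by rw [← h.hord]; exact pow_orderOf_eq_one _
  simpa [Hyp.unitP] using h2

end Hyp

/-- Multiplication by a unit, as an automorphism of the (multiplicatively written)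
cyclic group `ZMod n`. -/
def zmodMulAut (n : ℕ) : (ZMod n)ˣ →* MulAut (Multiplicative (ZMod n)) where
  toFun u :=
    { toFun := fun x => ofAdd ((u : ZMod n) * x.toAdd)
      invFun := fun x => ofAdd (((u⁻¹ : (ZMod n)ˣ) : ZMod n) * x.toAdd)
      left_inv := fun x => by simp
      right_inv := fun x => by simp
      map_mul' := fun x y => by simp [mul_add, ← ofAdd_add] }
  map_one' := by ext x; simp
  map_mul' u v := by ext x; simp [mul_assoc]

/-- The function underlying the automorphism of the dihedral group induced by
multiplication by a unit on the rotation part. -/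
def dihedralAutFun (n : ℕ) (u : (ZMod n)ˣ) : DihedralGroup n → DihedralGroup n
  | .r j => .r ((u : ZMod n) * j)
  | .sr j => .sr ((u : ZMod n) * j)

/-- Multiplication of indices by a unit, as an automorphism of the dihedral group:
`a ↦ a^u`, `b ↦ b`. -/
def dihedralAut (n : ℕ) : (ZMod n)ˣ →* MulAut (DihedralGroup n) where
  toFun u :=
    { toFun := dihedralAutFun n u
      invFun := dihedralAutFun n u⁻¹
      left_inv := fun x => by cases x <;> simp [dihedralAutFun]
      right_inv := fun x => by cases x <;> simp [dihedralAutFun]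
      map_mul' := fun x y => by cases x <;> cases y <;> simp [dihedralAutFun, mul_add, mul_sub] }
  map_one' := by ext x; cases x <;> simp [dihedralAutFun]
  map_mul' u v := by ext x; cases x <;> simp [dihedralAutFun, mul_assoc]

/-- The homomorphism `ZMod q →* G` (written multiplicatively) sending `1` to a fixed
element `g` with `g ^ q = 1`. -/
def zmodPow {G : Type*} [Group G] (q : ℕ) [NeZero q] (g : G) (hg : g ^ q = 1) :
    Multiplicative (ZMod q) →* G where
  toFun x := g ^ (toAdd x).val
  map_one' := by
    show g ^ (toAdd (1 : Multiplicative (ZMod q))).val = 1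
    rw [toAdd_one, ZMod.val_zero, pow_zero]
  map_mul' x y := by
    have key : ∀ m : ℕ, g ^ (m % q) = g ^ m := fun m => by
      conv_rhs => rw [← Nat.div_add_mod m q]
      rw [pow_add, pow_mul, hg, one_pow, one_mul]
    show g ^ (toAdd (x * y)).val = g ^ (toAdd x).val * g ^ (toAdd y).val
    rw [toAdd_mul, ZMod.val_add, key, pow_add]

namespace Hyp

variable {p q i : ℕ}

/-- The action of `C_q` on `C_{pq}` sending the generator to multiplication by `i`. -/
def phiN (h : Hyp p q i) : Multiplicative (ZMod q) →* MulAut (Multiplicative (ZMod (p * q))) :=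
  haveI : NeZero q := ⟨h.hq.ne_zero⟩
  zmodPow q (zmodMulAut (p * q) h.unit) (by rw [← map_pow, h.unit_pow, map_one])

/-- The action of `C_q` on `D_{2pq}` sending the generator to `τ` (`τ(a) = a^i`, `τ(b) = b`). -/
def phiG (h : Hyp p q i) : Multiplicative (ZMod q) →* MulAut (DihedralGroup (p * q)) :=
  haveI : NeZero q := ⟨h.hq.ne_zero⟩
  zmodPow q (dihedralAut (p * q) h.unit) (by rw [← map_pow, h.unit_pow, map_one])

/-- The action of `C_q` on `C_p` sending the generator to multiplication by `i`. -/
def phiF (h : Hyp p q i) : Multiplicative (ZMod q) →* MulAut (Multiplicative (ZMod p)) :=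
  haveI : NeZero q := ⟨h.hq.ne_zero⟩
  zmodPow q (zmodMulAut p h.unitP) (by rw [← map_pow, h.unitP_pow, map_one])

end Hyp

/-- The group `N_{pq²} = ⟨a, c ∣ a^{pq} = c^q = 1, c a c⁻¹ = a^i⟩ = C_{pq} ⋊ C_q`. -/
abbrev Npq2 {p q i : ℕ} (h : Hyp p q i) : Type :=
  Multiplicative (ZMod (p * q)) ⋊[h.phiN] Multiplicative (ZMod q)

/-- The group `G_{p,q} = D_{2pq} ⋊_φ C_q`. -/
abbrev Gpq {p q i : ℕ} (h : Hyp p q i) : Type :=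
  DihedralGroup (p * q) ⋊[h.phiG] Multiplicative (ZMod q)

/-- The Frobenius group `F_{p,q} = C_p ⋊ C_q` (the nonabelian group of order `pq`). -/
abbrev Fpq {p q i : ℕ} (h : Hyp p q i) : Type :=
  Multiplicative (ZMod p) ⋊[h.phiF] Multiplicative (ZMod q)

variable {p q i : ℕ}

/-- The generator `a` of `N_{pq²}`. -/
def aN (h : Hyp p q i) : Npq2 h := SemidirectProduct.inl (ofAdd 1)

/-- The generator `c` of `N_{pq²}`. -/
def cN (h : Hyp p q i) : Npq2 h := SemidirectProduct.inr (ofAdd 1)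

/-- The generator `a` of `G_{p,q}`. -/
def aG (h : Hyp p q i) : Gpq h := SemidirectProduct.inl (DihedralGroup.r 1)

/-- The generator `b` of `G_{p,q}`. -/
def bG (h : Hyp p q i) : Gpq h := SemidirectProduct.inl (DihedralGroup.sr 0)

/-- The generator `c` of `G_{p,q}`. -/
def cG (h : Hyp p q i) : Gpq h := SemidirectProduct.inr (ofAdd 1)

/-- The real conjugacy class `(g)^± = (g) ∪ (g⁻¹)`. -/
def realClass {G : Type*} [Group G] (g : G) : Set G := {x | IsConj g x ∨ IsConj g⁻¹ x}

/-- `N` is a normal subgroup whose quotient is an `ℓ`-group (the quotient has `ℓ`-power order,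
i.e. `N` has `ℓ`-power index). -/
def OQuot {G : Type*} [Group G] (ℓ : ℕ) (N : Subgroup G) : Prop :=
  N.Normal ∧ ∃ k : ℕ, N.index = ℓ ^ k

/-- `H` is a large subgroup of `G`: it contains `O^ℓ(G)`, the smallest normal subgroup
with `ℓ`-group quotient, for some prime `ℓ`. -/
def IsLarge {G : Type*} [Group G] (H : Subgroup G) : Prop :=
  ∃ ℓ : ℕ, Nat.Prime ℓ ∧
    ∃ N : Subgroup G, OQuot ℓ N ∧ (∀ M : Subgroup G, OQuot ℓ M → N ≤ M) ∧ N ≤ H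

section Reps

variable {k : Type*} [CommSemiring k] {G : Type*} [Group G]

/-- The subspace `V^H` of `H`-fixed vectors of a representation. -/
def fixedPts {V : Type*} [AddCommMonoid V] [Module k V]
    (ρ : Representation k G V) (H : Subgroup G) : Submodule k V where
  carrier := {v | ∀ g ∈ H, ρ g v = v}
  add_mem' := by
    intro a b ha hb g hg
    rw [map_add, ha g hg, hb g hg]
  zero_mem' := by
    intro g hg
    rw [map_zero]
  smul_mem' := by
    intro c v hv g hg
    rw [map_smul, hv g hg]

end Reps

/-- The weak gap condition for a real representation: `dim V^P ≥ 2 dim V^H` for all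
`P < H ≤ G` with `P` of prime power order. -/
def WeakGap {G : Type*} [Group G] {V : Type*} [AddCommGroup V] [Module ℝ V]
    (ρ : Representation ℝ G V) : Prop :=
  ∀ P H : Subgroup G, P < H → (∃ ℓ k : ℕ, Nat.Prime ℓ ∧ Nat.card P = ℓ ^ k) →
    2 * Module.finrank ℝ (fixedPts ρ H) ≤ Module.finrank ℝ (fixedPts ρ P)

/-- Isomorphism of real representations: an equivariant linear equivalence. -/
def RepIso {G : Type*} [Group G] {U V : Type*} [AddCommGroup U] [Module ℝ U]
    [AddCommGroup V] [Module ℝ V]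
    (ρU : Representation ℝ G U) (ρV : Representation ℝ G V) : Prop :=
  ∃ e : U ≃ₗ[ℝ] V, ∀ (g : G) (u : U), e (ρU g u) = ρV g (e u)

/-- Two real representations are `𝒫`-matched if their restrictions to every subgroup of
prime power order are isomorphic. -/
def PMatched {G : Type*} [Group G] {U V : Type*} [AddCommGroup U] [Module ℝ U]
    [AddCommGroup V] [Module ℝ V]
    (ρU : Representation ℝ G U) (ρV : Representation ℝ G V) : Prop :=
  ∀ P : Subgroup G, (∃ ℓ k : ℕ, Nat.Prime ℓ ∧ Nat.card P = ℓ ^ k) →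
    RepIso (ρU.comp P.subtype) (ρV.comp P.subtype)

/-- A bundled finite-dimensional-free real representation of `G`. -/
structure RealRep (G : Type*) [Group G] where
  carrier : Type
  [acg : AddCommGroup carrier]
  [mod : Module ℝ carrier]
  rho : Representation ℝ G carrier

attribute [instance] RealRep.acg RealRep.mod

theorem dihedralAut_pow_r (n : ℕ) (u : (ZMod n)ˣ) (k : ℕ) (m : ZMod n) :
    ((dihedralAut n u) ^ k) (DihedralGroup.r m)
      = DihedralGroup.r (((u ^ k : (ZMod n)ˣ) : ZMod n) * m) := by
  induction k generalizing m with
  | zero => simp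
  | succ k ih =>
    rw [pow_succ, MulAut.mul_apply]
    have h1 : (dihedralAut n u) (DihedralGroup.r m) = DihedralGroup.r ((u : ZMod n) * m) := rfl
    rw [h1, ih, pow_succ, Units.val_mul, mul_assoc]

theorem Hyp.phiG_r (h : Hyp p q i) (z : Multiplicative (ZMod q)) (m : ZMod (p * q)) :
    h.phiG z (DihedralGroup.r m)
      = DihedralGroup.r (((h.unit ^ (toAdd z).val : (ZMod (p * q))ˣ) : ZMod (p * q)) * m) := by
  have h1 : h.phiG z = (dihedralAut (p * q) h.unit) ^ (toAdd z).val := rfl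
  rw [h1, dihedralAut_pow_r]

theorem r_inv (n : ℕ) (m : ZMod n) : (DihedralGroup.r m)⁻¹ = DihedralGroup.r (-m) := rfl

/-- The subgroup `N_{pq²} = {(aˡ, cᵐ)}` of `G_{p,q}`. -/
def NSub (h : Hyp p q i) : Subgroup (Gpq h) where
  carrier := {x | ∃ l : ZMod (p * q), x.left = DihedralGroup.r l}
  one_mem' := ⟨0, rfl⟩
  mul_mem' := by
    rintro x y ⟨lx, hx⟩ ⟨ly, hy⟩
    refine ⟨lx + (h.unit ^ (toAdd x.right).val : (ZMod (p * q))ˣ) * ly, ?_⟩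
    rw [SemidirectProduct.mul_left, hx, hy, h.phiG_r, DihedralGroup.r_mul_r]
  inv_mem' := by
    rintro x ⟨lx, hx⟩
    refine ⟨-((h.unit ^ (toAdd x.right⁻¹).val : (ZMod (p * q))ˣ) * lx), ?_⟩
    rw [SemidirectProduct.inv_left, hx, r_inv, h.phiG_r]
    congr 1
    ring

/-- The subgroup `N_{2pq} = {(bᵉaˡ, 1)} ≅ D_{2pq}` of `G_{p,q}`. -/
def N2pqSub (h : Hyp p q i) : Subgroup (Gpq h) :=
  MonoidHom.ker SemidirectProduct.rightHom

/-- The subgroup `N¹_{pq} = {(aˡ, 1)}` of `G_{p,q}`. -/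
def NpqOneSub (h : Hyp p q i) : Subgroup (Gpq h) where
  carrier := {x | x.right = 1 ∧ ∃ l : ZMod (p * q), x.left = DihedralGroup.r l}
  one_mem' := ⟨rfl, 0, rfl⟩
  mul_mem' := by
    rintro x y ⟨hx1, lx, hx⟩ ⟨hy1, ly, hy⟩
    refine ⟨by rw [SemidirectProduct.mul_right, hx1, hy1, mul_one],
      lx + (h.unit ^ (toAdd x.right).val : (ZMod (p * q))ˣ) * ly, ?_⟩
    rw [SemidirectProduct.mul_left, hx, hy, h.phiG_r, DihedralGroup.r_mul_r]
  inv_mem' := by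
    rintro x ⟨hx1, lx, hx⟩
    refine ⟨by rw [SemidirectProduct.inv_right, hx1, inv_one],
      -((h.unit ^ (toAdd x.right⁻¹).val : (ZMod (p * q))ˣ) * lx), ?_⟩
    rw [SemidirectProduct.inv_left, hx, r_inv, h.phiG_r]
    congr 1
    ring

/-- The subgroup `N²_{pq} = {(a^{qs}, cᵐ)}` of `G_{p,q}`. -/
def NpqTwoSub (h : Hyp p q i) : Subgroup (Gpq h) where
  carrier := {x | ∃ s : ZMod (p * q), x.left = DihedralGroup.r ((q : ZMod (p * q)) * s)}
  one_mem' := ⟨0, by rw [mul_zero]; rfl⟩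
  mul_mem' := by
    rintro x y ⟨sx, hx⟩ ⟨sy, hy⟩
    refine ⟨sx + (h.unit ^ (toAdd x.right).val : (ZMod (p * q))ˣ) * sy, ?_⟩
    rw [SemidirectProduct.mul_left, hx, hy, h.phiG_r, DihedralGroup.r_mul_r]
    congr 1
    ring
  inv_mem' := by
    rintro x ⟨sx, hx⟩
    refine ⟨-((h.unit ^ (toAdd x.right⁻¹).val : (ZMod (p * q))ˣ) * sx), ?_⟩
    rw [SemidirectProduct.inv_left, hx, r_inv, h.phiG_r]
    congr 1
    ring

/-- The subgroup `N_p = {(a^{qs}, 1)}` of `G_{p,q}`. -/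
def NpSub (h : Hyp p q i) : Subgroup (Gpq h) where
  carrier := {x | x.right = 1 ∧ ∃ s : ZMod (p * q), x.left = DihedralGroup.r ((q : ZMod (p * q)) * s)}
  one_mem' := ⟨rfl, 0, by rw [mul_zero]; rfl⟩
  mul_mem' := by
    rintro x y ⟨hx1, sx, hx⟩ ⟨hy1, sy, hy⟩
    refine ⟨by rw [SemidirectProduct.mul_right, hx1, hy1, mul_one],
      sx + (h.unit ^ (toAdd x.right).val : (ZMod (p * q))ˣ) * sy, ?_⟩
    rw [SemidirectProduct.mul_left, hx, hy, h.phiG_r, DihedralGroup.r_mul_r]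
    congr 1
    ring
  inv_mem' := by
    rintro x ⟨hx1, sx, hx⟩
    refine ⟨by rw [SemidirectProduct.inv_right, hx1, inv_one],
      -((h.unit ^ (toAdd x.right⁻¹).val : (ZMod (p * q))ˣ) * sx), ?_⟩
    rw [SemidirectProduct.inv_left, hx, r_inv, h.phiG_r]
    congr 1
    ring

/-- The subgroup `N_q = {(a^{ps}, 1)}` of `G_{p,q}`. -/
def NqSub (h : Hyp p q i) : Subgroup (Gpq h) where
  carrier := {x | x.right = 1 ∧ ∃ s : ZMod (p * q), x.left = DihedralGroup.r ((p : ZMod (p * q)) * s)}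
  one_mem' := ⟨rfl, 0, by rw [mul_zero]; rfl⟩
  mul_mem' := by
    rintro x y ⟨hx1, sx, hx⟩ ⟨hy1, sy, hy⟩
    refine ⟨by rw [SemidirectProduct.mul_right, hx1, hy1, mul_one],
      sx + (h.unit ^ (toAdd x.right).val : (ZMod (p * q))ˣ) * sy, ?_⟩
    rw [SemidirectProduct.mul_left, hx, hy, h.phiG_r, DihedralGroup.r_mul_r]
    congr 1
    ring
  inv_mem' := by
    rintro x ⟨hx1, sx, hx⟩
    refine ⟨by rw [SemidirectProduct.inv_right, hx1, inv_one],
      -((h.unit ^ (toAdd x.right⁻¹).val : (ZMod (p * q))ˣ) * sx), ?_⟩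
    rw [SemidirectProduct.inv_left, hx, r_inv, h.phiG_r]
    congr 1
    ring

end Mizerka

theorem eq_one_of_mul_self_eq_one_of_odd_card {G : Type*} [Group G] (hG : Odd (Nat.card G))
    {x : G} (hx : x * x = 1) : x = 1 := by
  have h2 : orderOf x ∣ 2 := orderOf_dvd_of_pow_eq_one (by rwa [pow_two])
  rcases (Nat.dvd_prime Nat.prime_two).mp h2 with h1 | h1
  · exact orderOf_eq_one_iff.mp h1
  · have := orderOf_dvd_natCard x
    rw [h1, ← even_iff_two_dvd] at this
    exact absurd hG (Nat.not_odd_iff_even.mpr this)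

namespace DihedralGroup

/-- Every element of `D_{2n}` is a product of reflections, and reflections are involutions. -/
theorem monoidHom_apply_eq_one_of_odd_card {n : ℕ} {G : Type*} [Group G]
    (hG : Odd (Nat.card G)) (f : DihedralGroup n →* G) (x : DihedralGroup n) : f x = 1 := by
  have hsr : ∀ j, f (sr j) = 1 := fun j =>
    eq_one_of_mul_self_eq_one_of_odd_card hG
      (by rw [← map_mul, sr_mul_sr, sub_self, ← one_def, map_one])
  cases x with
  | r j => rw [show r j = sr 0 * sr j by rw [sr_mul_sr, sub_zero], map_mul, hsr, hsr, one_mul]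
  | sr j => exact hsr j

end DihedralGroup

namespace SemidirectProduct

theorem surjective_comp_inr {N G H : Type*} [Group N] [Group G] [Group H] {φ : G →* MulAut N}
    {f : N ⋊[φ] G →* H} (hf : Function.Surjective f) (hinl : ∀ n, f (inl n) = 1) :
    Function.Surjective (f.comp inr) := by
  intro y
  obtain ⟨x, rfl⟩ := hf y
  refine ⟨x.right, ?_⟩
  conv_rhs => rw [← inl_left_mul_inr_right x]
  rw [map_mul, hinl, one_mul, MonoidHom.comp_apply]

end SemidirectProduct

open Mizerka in
theorem statement_16_general {p q i : ℕ} (h : Hyp p q i) (N : Subgroup (Gpq h)) (hN : N.Normal)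
    (hodd : Odd (Nat.card (Gpq h ⧸ N))) :
    Nat.card (Gpq h ⧸ N) = 1 ∨ Nat.Prime (Nat.card (Gpq h ⧸ N)) := by
  have hsurj : Function.Surjective ((QuotientGroup.mk' N).comp SemidirectProduct.inr) :=
    SemidirectProduct.surjective_comp_inr (QuotientGroup.mk'_surjective N) fun d =>
      DihedralGroup.monoidHom_apply_eq_one_of_odd_card hodd
        ((QuotientGroup.mk' N).comp SemidirectProduct.inl) d
  have hdvd : Nat.card (Gpq h ⧸ N) ∣ q := by
    simpa [Nat.card_congr Multiplicative.toAdd] using Subgroup.card_dvd_of_surjective _ hsurj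
  rcases (Nat.dvd_prime h.hq).mp hdvd with hone | hcard
  · exact Or.inl hone
  · exact Or.inr (by rw [hcard]; exact h.hq)

open Mizerka in
/-- `G_{p,q}` has no cyclic quotient of odd composite order: every cyclic
quotient of odd order has order `1` or a prime. -/
theorem statement_16 {p q i : ℕ} (h : Hyp p q i) (N : Subgroup (Gpq h)) (hN : N.Normal)
    (hcyc : haveI := hN; IsCyclic (Gpq h ⧸ N)) (hodd : Odd (Nat.card (Gpq h ⧸ N))) :
    Nat.card (Gpq h ⧸ N) = 1 ∨ Nat.Prime (Nat.card (Gpq h ⧸ N)) :=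
  statement_16_general h N hN hodd
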